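/- arXiv:1303.4673 — 2 statements merged into one kernel-verified Lean document; each statement's English description precedes it below -/
import Mathlib

section
/- In any complete edge coloring of a geometric graph of order n, there are at most n color classes of size one. -/
open scoped Classical

abbrev Pt : Type := ℝ × ℝ

/-- No three distinct points of `S` are collinear. -/
def GenPos (S : Finset Pt) : Prop :=
  ∀ p ∈ S, ∀ q ∈ S, ∀ r ∈ S, p ≠ q → q ≠ r → p ≠ r → ¬ Collinear ℝ ({p, q, r} : Set Pt)

/-- The closed straight-line segment of an (unordered) edge. -/
noncomputable def seg2 : Sym2 Pt → Set Pt :=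
  Sym2.lift ⟨fun p q => segment ℝ p q, fun p q => segment_symm ℝ p q⟩

/-- Two edges intersect: they share a point (common endpoint or crossing). -/
def SInter (e f : Sym2 Pt) : Prop := (seg2 e ∩ seg2 f).Nonempty

/-- A geometric graph: vertices in general position, straight-line edges. -/
structure GeomGraph where
  verts : Finset Pt
  edges : Finset (Sym2 Pt)
  genpos : GenPos verts
  edge_mem : ∀ e ∈ edges, ∀ p ∈ e, p ∈ verts
  edge_ne : ∀ e ∈ edges, ¬ e.IsDiag

/-- A coloring is complete on edge set `E` if every pair of used colors appears
on a pair of intersecting edges. -/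
def CompleteOn (E : Finset (Sym2 Pt)) (c : Sym2 Pt → ℕ) : Prop :=
  ∀ i ∈ E.image c, ∀ j ∈ E.image c, i ≠ j →
    ∃ e ∈ E, ∃ f ∈ E, c e = i ∧ c f = j ∧ SInter e f

/-- A coloring is proper if same-colored edges are disjoint. -/
def ProperOn (E : Finset (Sym2 Pt)) (c : Sym2 Pt → ℕ) : Prop :=
  ∀ e ∈ E, ∀ f ∈ E, e ≠ f → c e = c f → ¬ SInter e f

/-- Points in convex position. -/
def ConvexPos (S : Finset Pt) : Prop :=
  ∀ p ∈ S, p ∉ convexHull ℝ ((S : Set Pt) \ {p})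

/-- Edge set of the complete geometric graph on `S`. -/
noncomputable def edgeSet (S : Finset Pt) : Finset (Sym2 Pt) :=
  S.sym2.filter (fun e => ¬ e.IsDiag)

def ShareEndpoint (e f : Sym2 Pt) : Prop := ∃ p : Pt, p ∈ e ∧ p ∈ f

def Crossing (e f : Sym2 Pt) : Prop := SInter e f ∧ ¬ ShareEndpoint e f

/-- Number of unordered pairs of distinct edges of `E` satisfying the
(symmetric) relation `P`. -/
noncomputable def pairCount (E : Finset (Sym2 Pt)) (P : Sym2 Pt → Sym2 Pt → Prop) : ℕ :=
  ((E ×ˢ E).filter (fun q => q.1 ≠ q.2 ∧ P q.1 q.2)).card / 2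

/-- The `k`-th vertex (clockwise) of the regular `n`-gon. -/
noncomputable def pt (n k : ℕ) : Pt :=
  (Real.cos (2 * Real.pi * k / n), -Real.sin (2 * Real.pi * k / n))

/-- Vertex set of the regular `n`-gon. -/
noncomputable def ngon (n : ℕ) : Finset Pt := (Finset.range n).image (pt n)

/-- `pq` is a halving edge of `S`: each open half-plane bounded by the line
through `p` and `q` contains at least `⌊(n-2)/2⌋` points of `S`. -/
def IsHalvingPts (S : Finset Pt) (p q : Pt) : Prop :=
  (S.card - 2) / 2 ≤ (S.filter (fun r =>
      0 < (q.1 - p.1) * (r.2 - p.2) - (q.2 - p.2) * (r.1 - p.1))).card ∧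
  (S.card - 2) / 2 ≤ (S.filter (fun r =>
      (q.1 - p.1) * (r.2 - p.2) - (q.2 - p.2) * (r.1 - p.1) < 0)).card

/-- The edge `e_{i,j}` of the regular `n`-gon is halving. -/
def Halving (n i j : ℕ) : Prop := IsHalvingPts (ngon n) (pt n i) (pt n j)

/-- The edges `e_{i,j}` and `e_{i',j'}` of the regular `n`-gon intersect. -/
def EInter (n i j i' j' : ℕ) : Prop :=
  (segment ℝ (pt n i) (pt n j) ∩ segment ℝ (pt n i') (pt n j')).Nonempty

/-- `(e_{i,j}, e_{j+1,k})` is a halving pair. -/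
def HalvingPair (n i j k : ℕ) : Prop :=
  pt n i ≠ pt n j ∧ pt n (j + 1) ≠ pt n k ∧ ¬ EInter n i j (j + 1) k ∧
  (Halving n i (j + 1) ∨ Halving n i k ∨ Halving n j k)

/-!
The edges whose colour class is a singleton pairwise intersect, by completeness, so it suffices
that a geometric graph with pairwise intersecting edges has at most as many edges as vertices.
Call `uv` rightmost at `u` if every other edge at `u` lies strictly to the left of the directed
line `uv`. Every edge `uv` is rightmost at one of its endpoints: otherwise some edge `uw` lies to
the right of that line and some edge `vw'` to its left, and these lie in opposite closed
half-planes meeting the line only in `u` and `v` respectively, so they are disjoint. A vertex has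
at most one rightmost edge, so choosing such an endpoint for each edge is injective.
-/

-- Positive iff `r` lies strictly to the left of the directed line from `p` to `q`.
noncomputable def orient (p q r : Pt) : ℝ :=
  (q.1 - p.1) * (r.2 - p.2) - (q.2 - p.2) * (r.1 - p.1)

lemma orient_swap_left (p q r : Pt) : orient q p r = -orient p q r := by
  simp only [orient]; ring

lemma orient_swap_right (p q r : Pt) : orient p r q = -orient p q r := by
  simp only [orient]; ring

@[simp] lemma orient_self_left (p q : Pt) : orient p q p = 0 := by
  simp only [orient]; ring

@[simp] lemma orient_self_right (p q : Pt) : orient p q q = 0 := by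
  simp only [orient]; ring

lemma orient_lineMap (p q a b : Pt) (t : ℝ) :
    orient p q (AffineMap.lineMap a b t) = (1 - t) * orient p q a + t * orient p q b := by
  simp only [orient, AffineMap.lineMap_apply_module, Prod.fst_add, Prod.snd_add,
    Prod.smul_fst, Prod.smul_snd, smul_eq_mul]
  ring

lemma collinear_of_orient_eq_zero {p q r : Pt} (h : orient p q r = 0) :
    Collinear ℝ ({p, q, r} : Set Pt) := by
  by_cases hpq : p = q
  · subst hpq
    simpa using collinear_pair ℝ p r
  have hd : (q.1 - p.1) ^ 2 + (q.2 - p.2) ^ 2 ≠ 0 := by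
    intro h0
    exact hpq (Prod.ext (by nlinarith) (by nlinarith))
  -- Since `r - p` is parallel to `q - p`, it is its orthogonal projection onto `q - p`.
  have hr : AffineMap.lineMap p q
      (((r.1 - p.1) * (q.1 - p.1) + (r.2 - p.2) * (q.2 - p.2)) /
        ((q.1 - p.1) ^ 2 + (q.2 - p.2) ^ 2)) = r := by
    simp only [orient] at h
    simp only [AffineMap.lineMap_apply_module, Prod.ext_iff, Prod.fst_add, Prod.snd_add,
      Prod.smul_fst, Prod.smul_snd, smul_eq_mul]
    constructor <;> field_simp
    · linear_combination (q.2 - p.2) * h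
    · linear_combination (p.1 - q.1) * h
  rw [Set.pair_comm q r, Set.insert_comm p r, ← hr]
  exact collinear_insert_of_mem_affineSpan_pair (AffineMap.lineMap_mem_affineSpan_pair _ _ _)

lemma GenPos.orient_ne_zero {S : Finset Pt} (hS : GenPos S) {p q r : Pt} (hp : p ∈ S)
    (hq : q ∈ S) (hr : r ∈ S) (hpq : p ≠ q) (hqr : q ≠ r) (hpr : p ≠ r) : orient p q r ≠ 0 :=
  fun h => hS p hp q hq r hr hpq hqr hpr (collinear_of_orient_eq_zero h)

lemma not_sInter_of_orient_neg_of_orient_pos {u v w w' : Pt} (huv : u ≠ v)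
    (hw : orient u v w < 0) (hw' : 0 < orient u v w') : ¬ SInter s(u, w) s(v, w') := by
  rintro ⟨x, hx, hx'⟩
  obtain ⟨s, ⟨hs, -⟩, rfl⟩ := (segment_eq_image_lineMap ℝ u w).subst (motive := (x ∈ ·)) hx
  obtain ⟨t, ⟨ht, -⟩, hst⟩ := (segment_eq_image_lineMap ℝ v w').subst (motive := (_ ∈ ·)) hx'
  have horient := congrArg (orient u v) hst
  simp only [orient_lineMap, orient_self_left, orient_self_right, mul_zero, zero_add] at horient
  have hs0 : s = 0 := by nlinarith
  have ht0 : t = 0 := by nlinarith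
  simp only [hs0, ht0, AffineMap.lineMap_apply_zero] at hst
  exact huv hst.symm

namespace GeomGraph

lemma orient_ne_zero_of_mem_edges (G : GeomGraph) {u v w : Pt} (hv : s(u, v) ∈ G.edges)
    (hw : s(u, w) ∈ G.edges) (hwv : w ≠ v) : orient u v w ≠ 0 :=
  G.genpos.orient_ne_zero (G.edge_mem _ hv u (Sym2.mem_mk_left _ _))
    (G.edge_mem _ hv v (Sym2.mem_mk_right _ _)) (G.edge_mem _ hw w (Sym2.mem_mk_right _ _))
    (fun h => G.edge_ne _ hv (Sym2.mk_isDiag_iff.mpr h)) hwv.symm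
    (fun h => G.edge_ne _ hw (Sym2.mk_isDiag_iff.mpr h))

def IsRightmostEdge (G : GeomGraph) (u v : Pt) : Prop :=
  ∀ w, s(u, w) ∈ G.edges → w ≠ v → 0 < orient u v w

lemma IsRightmostEdge.eq {G : GeomGraph} {u v v' : Pt} (h : G.IsRightmostEdge u v)
    (h' : G.IsRightmostEdge u v') (hv : s(u, v) ∈ G.edges) (hv' : s(u, v') ∈ G.edges) :
    v = v' := by
  by_contra hne
  have := h v' hv' (Ne.symm hne)
  have := h' v hv hne
  linarith [orient_swap_right u v v']

lemma isRightmostEdge_or_swap (G : GeomGraph) (hG : (G.edges : Set (Sym2 Pt)).Pairwise SInter)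
    {u v : Pt} (he : s(u, v) ∈ G.edges) : G.IsRightmostEdge u v ∨ G.IsRightmostEdge v u := by
  by_contra! hcon
  simp only [IsRightmostEdge, not_forall, not_lt, exists_prop] at hcon
  obtain ⟨⟨w, hw, hwv, hw0⟩, ⟨w', hw', hw'u, hw'0⟩⟩ := hcon
  have huv : u ≠ v := fun h => G.edge_ne _ he (Sym2.mk_isDiag_iff.mpr h)
  have hneg : orient u v w < 0 := hw0.lt_of_ne (G.orient_ne_zero_of_mem_edges he hw hwv)
  have hpos : 0 < orient u v w' := by
    have := hw'0.lt_of_ne (G.orient_ne_zero_of_mem_edges (Sym2.eq_swap ▸ he) hw' hw'u)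
    linarith [orient_swap_left u v w']
  have hne : s(u, w) ≠ s(v, w') := by
    rw [Ne, Sym2.eq_iff]
    rintro (⟨h, -⟩ | ⟨h, -⟩)
    exacts [huv h, hw'u h.symm]
  exact not_sInter_of_orient_neg_of_orient_pos huv hneg hpos (hG hw hw' hne)

theorem card_edges_le_card_verts_of_pairwise_sInter (G : GeomGraph)
    (hG : (G.edges : Set (Sym2 Pt)).Pairwise SInter) : G.edges.card ≤ G.verts.card := by
  have hrightmost : ∀ e ∈ G.edges, ∃ u v, e = s(u, v) ∧ G.IsRightmostEdge u v := by
    intro e he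
    induction e using Sym2.ind with
    | _ u v =>
      rcases G.isRightmostEdge_or_swap hG he with h | h
      exacts [⟨u, v, rfl, h⟩, ⟨v, u, Sym2.eq_swap, h⟩]
  choose! tail head hspec using hrightmost
  refine Finset.card_le_card_of_injOn tail (fun e he => ?_) (fun e he f hf hef => ?_)
  · exact G.edge_mem e he _ (Sym2.mem_iff_exists.mpr ⟨head e, (hspec e he).1⟩)
  · obtain ⟨he_eq, he_right⟩ := hspec e he
    obtain ⟨hf_eq, hf_right⟩ := hspec f hf
    rw [hef] at he_eq he_right
    rw [he_eq, he_right.eq hf_right (he_eq ▸ he) (hf_eq ▸ hf), ← hf_eq]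

end GeomGraph

noncomputable def singletonClassEdges (E : Finset (Sym2 Pt)) (c : Sym2 Pt → ℕ) :
    Finset (Sym2 Pt) :=
  E.filter fun e => (E.filter fun f => c f = c e).card = 1

lemma eq_of_mem_singletonClassEdges {E : Finset (Sym2 Pt)} {c : Sym2 Pt → ℕ} {e g : Sym2 Pt}
    (he : e ∈ singletonClassEdges E c) (hg : g ∈ E) (hcg : c g = c e) : g = e := by
  rw [singletonClassEdges, Finset.mem_filter] at he
  exact Finset.card_le_one.mp he.2.le g (Finset.mem_filter.mpr ⟨hg, hcg⟩) e
    (Finset.mem_filter.mpr ⟨he.1, rfl⟩)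

lemma card_singleton_classes_le (E : Finset (Sym2 Pt)) (c : Sym2 Pt → ℕ) :
    ((E.image c).filter fun i => (E.filter fun e => c e = i).card = 1).card ≤
      (singletonClassEdges E c).card := by
  refine (Finset.card_le_card fun i hi => ?_).trans (Finset.card_image_le (f := c))
  obtain ⟨⟨e, he, rfl⟩, hcard⟩ := by simpa only [Finset.mem_filter, Finset.mem_image] using hi
  exact Finset.mem_image_of_mem c (Finset.mem_filter.mpr ⟨he, hcard⟩)

lemma CompleteOn.pairwise_sInter_singletonClassEdges {E : Finset (Sym2 Pt)} {c : Sym2 Pt → ℕ}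
    (hc : CompleteOn E c) : (singletonClassEdges E c : Set (Sym2 Pt)).Pairwise SInter := by
  intro e he f hf hef
  have heE : e ∈ E := (Finset.mem_filter.mp he).1
  have hfE : f ∈ E := (Finset.mem_filter.mp hf).1
  have hcef : c e ≠ c f := fun h => hef (eq_of_mem_singletonClassEdges hf heE h)
  obtain ⟨e', he', f', hf', hce', hcf', hinter⟩ :=
    hc _ (Finset.mem_image_of_mem c heE) _ (Finset.mem_image_of_mem c hfE) hcef
  rwa [eq_of_mem_singletonClassEdges he he' hce', eq_of_mem_singletonClassEdges hf hf' hcf']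
    at hinter

/-- In any complete edge coloring of a geometric graph of order `n`, there are at most
`n` color classes of size one. -/
theorem singleton_classes_le_order (G : GeomGraph) (c : Sym2 Pt → ℕ)
    (hc : CompleteOn G.edges c) :
    ((G.edges.image c).filter
        (fun i => (G.edges.filter (fun e => c e = i)).card = 1)).card ≤ G.verts.card := by
  have hsub : singletonClassEdges G.edges c ⊆ G.edges := Finset.filter_subset _ _
  let G' : GeomGraph :=
    { G with
      edges := singletonClassEdges G.edges c
      edge_mem := fun e he => G.edge_mem e (hsub he)
      edge_ne := fun e he => G.edge_ne e (hsub he) }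
  exact (card_singleton_classes_le G.edges c).trans
    (G'.card_edges_le_card_verts_of_pairwise_sInter hc.pairwise_sInter_singletonClassEdges)
end

section
/- In a complete convex geometric graph of even order n, every almost-halving edge intersects every halving edge. -/
open scoped Classical

/-!
A halving edge of the regular `2m`-gon joins antipodal vertices: for `a < b < n` the open sides of
the chord `p_a p_b` contain exactly the `b - a - 1` vertices strictly between them and the other
`n - (b - a) - 1`, so both counts reach `m - 1` only when `b - a = m`. Hence a halving edge is a
diameter `[v, -v]` with `v` a vertex, and an almost-halving edge `e_{i,j}` has `p_{j+1} = -p_i`.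
A diameter through a vertex never separates two consecutive vertices, so `p_j` and `p_{j+1}` lie
weakly on one side of it and `p_i`, `p_j` weakly on opposite sides. A chord of the unit circle
with endpoints weakly on opposite sides of a diameter meets the diameter's line inside the disc,
i.e. on the diameter.
-/

open Real

noncomputable def circ (θ : ℝ) : Pt := (cos θ, -sin θ)

def cross (v w : Pt) : ℝ := v.1 * w.2 - v.2 * w.1

lemma cross_neg (v w : Pt) : cross v (-w) = -cross v w := by
  simp only [cross, Prod.fst_neg, Prod.snd_neg]
  ring

lemma cross_circ (α β : ℝ) : cross (circ α) (circ β) = sin (α - β) := by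
  simp only [cross, circ, sin_sub]
  ring

lemma circ_add_pi (θ : ℝ) : circ (θ + π) = -circ θ := by
  simp only [circ, cos_add_pi, sin_add_pi, Prod.neg_mk]

-- `sin A + sin B + sin C = -4 sin (A/2) sin (B/2) sin (C/2)` when `A + B + C = 0`
lemma cross_circ_sub_circ (x y z : ℝ) :
    cross (circ (2 * y) - circ (2 * x)) (circ (2 * z) - circ (2 * x)) =
      4 * sin (x - y) * sin (y - z) * sin (x - z) := by
  simp only [cross, circ, Prod.fst_sub, Prod.snd_sub, two_mul, sin_add, cos_add, sin_sub]
  have hx := sin_sq_add_cos_sq x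
  have hy := sin_sq_add_cos_sq y
  have hz := sin_sq_add_cos_sq z
  set sx := sin x; set cx := cos x
  set sy := sin y; set cy := cos y
  set sz := sin z; set cz := cos z
  linear_combination (-2*sz*cz + 4*cy^2*sz*cz + 2*sy*cy + -4*sy*cy*cz^2) * hx +
    (2*sz*cz + -4*cx^2*sz*cz + -2*sx*cx + 4*sx*cx*cz^2) * hy +
    (-2*sy*cy + 4*cx^2*sy*cy + 2*sx*cx + -4*sx*cx*cy^2) * hz

theorem segment_inter_diameter_nonempty {α β γ : ℝ}
    (h : cross (circ γ) (circ α) * cross (circ γ) (circ β) ≤ 0) :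
    (segment ℝ (circ α) (circ β) ∩ segment ℝ (circ γ) (-circ γ)).Nonempty := by
  obtain ⟨A, rfl⟩ : ∃ A, α = γ - A := ⟨γ - α, by ring⟩
  obtain ⟨B, rfl⟩ : ∃ B, β = γ - B := ⟨γ - β, by ring⟩
  rw [cross_circ, cross_circ, sub_sub_cancel, sub_sub_cancel] at h
  obtain ⟨s, t, hs, ht, hst, hzero⟩ : (0 : ℝ) ∈ segment ℝ (sin A) (sin B) := by
    rw [segment_eq_uIcc, Set.mem_uIcc]
    rcases mul_nonpos_iff.1 h with h | h
    · exact .inr h.symm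
    · exact .inl h
  rw [smul_eq_mul, smul_eq_mul] at hzero
  -- the point of the chord on the diameter's line is `c • circ γ`
  set c := s * cos A + t * cos B
  have hc₁ : -1 ≤ c := by nlinarith [neg_one_le_cos A, neg_one_le_cos B]
  have hc₂ : c ≤ 1 := by nlinarith [cos_le_one A, cos_le_one B]
  refine ⟨s • circ (γ - A) + t • circ (γ - B), ⟨s, t, hs, ht, hst, rfl⟩,
    (1 + c) / 2, (1 - c) / 2, by linarith, by linarith, by ring, ?_⟩
  simp only [circ, Prod.smul_mk, Prod.neg_mk, Prod.mk_add_mk, smul_eq_mul, cos_sub, sin_sub,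
    Prod.mk.injEq]
  constructor
  · linear_combination (-sin γ) * hzero
  · linear_combination (-cos γ) * hzero

lemma pt_eq_circ (n k : ℕ) : pt n k = circ (2 * π * k / n) := rfl

lemma pt_mod (n k : ℕ) : pt n (k % n) = pt n k := by
  rcases Nat.eq_zero_or_pos n with rfl | hn
  · rw [Nat.mod_zero]
  have hθ : 2 * π * k / n = 2 * π * (k % n : ℕ) / n + (k / n : ℕ) * (2 * π) := by
    conv_lhs => rw [← Nat.mod_add_div k n]
    push_cast
    field_simp
  simp only [pt_eq_circ, hθ, circ, cos_add_nat_mul_two_pi, sin_add_nat_mul_two_pi]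

lemma pt_add_half {n : ℕ} (heven : Even n) (hn : 0 < n) (k : ℕ) : pt n (k + n / 2) = -pt n k := by
  obtain ⟨m, rfl⟩ := heven
  have hm : (m : ℝ) ≠ 0 := by exact_mod_cast (by omega : m ≠ 0)
  rw [pt_eq_circ, pt_eq_circ, ← circ_add_pi]
  congr 1
  rw [show (m + m) / 2 = m by omega]
  push_cast
  field_simp
  ring

lemma pt_injOn (n : ℕ) : Set.InjOn (pt n) (Finset.range n) := by
  intro x hx y hy hxy
  simp only [Finset.coe_range, Set.mem_Iio] at hx hy
  have hn : (0 : ℝ) < n := by exact_mod_cast (by omega : 0 < n)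
  have hx' : (x : ℝ) < n := by exact_mod_cast hx
  have hy' : (y : ℝ) < n := by exact_mod_cast hy
  simp only [pt, Prod.mk.injEq, neg_inj] at hxy
  have hcos : cos (2 * π * x / n - 2 * π * y / n) = 1 := by
    rw [cos_sub, hxy.1, hxy.2, ← sq, ← sq, cos_sq_add_sin_sq]
  have hθ : 2 * π * x / n - 2 * π * y / n = 2 * π * ((x - y) / n) := by ring
  have hlt : |((x : ℝ) - y) / n| < 1 := by
    rw [abs_div, abs_of_pos hn, div_lt_one hn, abs_sub_lt_iff]
    constructor <;> linarith
  have := pi_pos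
  rw [hθ, cos_eq_one_iff_of_lt_of_lt (by nlinarith [abs_lt.1 hlt]) (by nlinarith [abs_lt.1 hlt])]
    at hcos
  simpa [pi_ne_zero, hn.ne', sub_eq_zero] using hcos

lemma card_ngon (n : ℕ) : (ngon n).card = n := by
  rw [ngon, Finset.card_image_of_injOn (pt_injOn n), Finset.card_range]

lemma card_filter_ngon_le {n : ℕ} {P : Pt → Prop} [DecidablePred P] (s : Finset ℕ)
    (h : ∀ k < n, P (pt n k) → k ∈ s) : ((ngon n).filter P).card ≤ s.card := by
  refine (Finset.card_le_card fun x hx => ?_).trans (Finset.card_image_le (f := pt n))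
  obtain ⟨hx, hP⟩ := Finset.mem_filter.1 hx
  obtain ⟨k, hk, rfl⟩ := Finset.mem_image.1 hx
  exact Finset.mem_image_of_mem _ (h k (Finset.mem_range.1 hk) hP)

lemma cross_pt_sub (n a b r : ℕ) :
    cross (pt n b - pt n a) (pt n r - pt n a) =
      4 * sin (π * (a - b) / n) * sin (π * (b - r) / n) * sin (π * (a - r) / n) := by
  have hpt : ∀ k : ℕ, pt n k = circ (2 * (π * k / n)) := fun k => by
    rw [pt_eq_circ, mul_div_assoc, mul_div_assoc, mul_assoc]
  rw [hpt, hpt, hpt, cross_circ_sub_circ]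
  ring_nf

lemma sin_pi_mul_div_nonneg {x y : ℝ} (hx : 0 ≤ x) (hxy : x ≤ y) : 0 ≤ sin (π * x / y) :=
  sin_nonneg_of_nonneg_of_le_pi (div_nonneg (mul_nonneg pi_pos.le hx) (hx.trans hxy))
    (div_le_of_le_mul₀ (hx.trans hxy) pi_pos.le (by have := pi_pos; nlinarith))

lemma sin_pi_mul_div_nonpos {x y : ℝ} (hx : x ≤ 0) (hxy : -y ≤ x) : sin (π * x / y) ≤ 0 := by
  have := sin_pi_mul_div_nonneg (x := -x) (y := y) (by linarith) (by linarith)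
  rw [mul_neg, neg_div, sin_neg] at this
  linarith

lemma cross_pt_sub_nonpos {n a b r : ℕ} (hab : a ≤ b) (hb : b ≤ n) (hr : r ≤ n)
    (h : r ≤ a ∨ b ≤ r) : cross (pt n b - pt n a) (pt n r - pt n a) ≤ 0 := by
  have hab' : (a : ℝ) ≤ b := by exact_mod_cast hab
  have hb' : (b : ℝ) ≤ n := by exact_mod_cast hb
  have hr' : (r : ℝ) ≤ n := by exact_mod_cast hr
  have ha₀ : (0 : ℝ) ≤ a := a.cast_nonneg
  have hr₀ : (0 : ℝ) ≤ r := r.cast_nonneg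
  rw [cross_pt_sub]
  have hba : sin (π * (a - b) / n) ≤ 0 := sin_pi_mul_div_nonpos (by linarith) (by linarith)
  rcases h with h | h
  · have h' : (r : ℝ) ≤ a := by exact_mod_cast h
    have hbr : 0 ≤ sin (π * (b - r) / n) := sin_pi_mul_div_nonneg (by linarith) (by linarith)
    have har : 0 ≤ sin (π * (a - r) / n) := sin_pi_mul_div_nonneg (by linarith) (by linarith)
    have := mul_nonneg hbr har
    nlinarith
  · have h' : (b : ℝ) ≤ r := by exact_mod_cast h
    have hbr : sin (π * (b - r) / n) ≤ 0 := sin_pi_mul_div_nonpos (by linarith) (by linarith)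
    have har : sin (π * (a - r) / n) ≤ 0 := sin_pi_mul_div_nonpos (by linarith) (by linarith)
    have := mul_nonneg_of_nonpos_of_nonpos hbr har
    nlinarith

lemma cross_pt_sub_nonneg {n a b r : ℕ} (hb : b ≤ n) (har : a ≤ r) (hrb : r ≤ b) :
    0 ≤ cross (pt n b - pt n a) (pt n r - pt n a) := by
  have har' : (a : ℝ) ≤ r := by exact_mod_cast har
  have hrb' : (r : ℝ) ≤ b := by exact_mod_cast hrb
  have hb' : (b : ℝ) ≤ n := by exact_mod_cast hb
  have ha₀ : (0 : ℝ) ≤ a := a.cast_nonneg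
  rw [cross_pt_sub]
  have hba : sin (π * (a - b) / n) ≤ 0 := sin_pi_mul_div_nonpos (by linarith) (by linarith)
  have hbr : 0 ≤ sin (π * (b - r) / n) := sin_pi_mul_div_nonneg (by linarith) (by linarith)
  have har : sin (π * (a - r) / n) ≤ 0 := sin_pi_mul_div_nonpos (by linarith) (by linarith)
  have := mul_nonneg_of_nonpos_of_nonpos hba har
  nlinarith

lemma isHalvingPts_comm {S : Finset Pt} {p q : Pt} : IsHalvingPts S p q ↔ IsHalvingPts S q p := by
  have hswap : ∀ r : Pt, (p.1 - q.1) * (r.2 - q.2) - (p.2 - q.2) * (r.1 - q.1) =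
      -((q.1 - p.1) * (r.2 - p.2) - (q.2 - p.2) * (r.1 - p.1)) := fun r => by ring
  simp only [IsHalvingPts, hswap, neg_pos, neg_lt_zero]
  exact and_comm

lemma not_isHalvingPts_self {S : Finset Pt} (hS : 4 ≤ S.card) (p : Pt) : ¬ IsHalvingPts S p p := by
  intro h
  have := h.1
  simp only [sub_self, zero_mul, lt_self_iff_false, Finset.filter_false, Finset.card_empty] at this
  omega

lemma eq_add_half_of_isHalvingPts {n a b : ℕ} (heven : Even n) (hab : a < b) (hb : b < n)
    (h : IsHalvingPts (ngon n) (pt n a) (pt n b)) : b = a + n / 2 := by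
  -- the half-plane tests in `IsHalvingPts` are `cross (pt n b - pt n a) (r - pt n a)` unfolded
  obtain ⟨hpos, hneg⟩ := h
  rw [card_ngon] at hpos hneg
  have hpos' : (n - 2) / 2 ≤ b - a - 1 := by
    refine hpos.trans ((card_filter_ngon_le (Finset.Ioo a b) fun r hr hP => ?_).trans
      (Nat.card_Ioo a b).le)
    have : ¬ (r ≤ a ∨ b ≤ r) := fun h => (cross_pt_sub_nonpos hab.le hb.le hr.le h).not_gt hP
    simp only [Finset.mem_Ioo]
    omega
  have hneg' : (n - 2) / 2 ≤ a + (n - b - 1) := by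
    refine hneg.trans ((card_filter_ngon_le (Finset.Iio a ∪ Finset.Ioo b n)
      fun r hr hP => ?_).trans ((Finset.card_union_le _ _).trans ?_))
    · have : ¬ (a ≤ r ∧ r ≤ b) := fun h => (cross_pt_sub_nonneg hb.le h.1 h.2).not_gt hP
      simp only [Finset.mem_union, Finset.mem_Iio, Finset.mem_Ioo]
      omega
    · rw [Nat.card_Iio, Nat.card_Ioo]
  obtain ⟨m, rfl⟩ := heven
  omega

theorem pt_eq_neg_of_halving {n a b : ℕ} (hn : 4 ≤ n) (heven : Even n) (h : Halving n a b) :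
    pt n b = -pt n a := by
  have hn₀ : 0 < n := by omega
  have ha := Nat.mod_lt a hn₀
  have hb := Nat.mod_lt b hn₀
  rw [Halving, ← pt_mod n a, ← pt_mod n b] at h
  rw [← pt_mod n a, ← pt_mod n b]
  rcases lt_trichotomy (a % n) (b % n) with hlt | heq | hgt
  · rw [eq_add_half_of_isHalvingPts heven hlt hb h, pt_add_half heven hn₀]
  · rw [heq] at h
    exact absurd h (not_isHalvingPts_self (by rwa [card_ngon]) _)
  · rw [eq_add_half_of_isHalvingPts heven hgt ha (isHalvingPts_comm.1 h), pt_add_half heven hn₀,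
      neg_neg]

lemma sin_mul_sin_sub_one_nonneg (m : ℕ) (d : ℤ) :
    0 ≤ sin (π * d / m) * sin (π * (d - 1) / m) := by
  rcases Nat.eq_zero_or_pos m with rfl | hm
  · simp
  obtain ⟨q, r, hr₀, hrm, rfl⟩ : ∃ q r : ℤ, 0 ≤ r ∧ r < m ∧ d = r + m * q :=
    ⟨d / m, d % m, Int.emod_nonneg _ (by omega), Int.emod_lt_of_pos _ (by omega),
      (Int.emod_add_mul_ediv d m).symm⟩
  have hm' : (m : ℝ) ≠ 0 := by exact_mod_cast hm.ne'
  -- shifting `d` by `m` flips the sign of both factors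
  have hshift : ∀ x : ℝ, π * (x + m * q) / m = π * x / m + q * π := fun x => by
    field_simp
  have hsign : ((-1 : ℝ) ^ q) * (-1) ^ q = 1 := by rw [← mul_zpow]; norm_num
  push_cast
  rw [hshift, add_sub_right_comm, hshift, sin_add_int_mul_pi, sin_add_int_mul_pi,
    mul_mul_mul_comm, hsign, one_mul]
  have hr : (r : ℝ) ≤ m := by exact_mod_cast hrm.le
  rcases (show r = 0 ∨ 1 ≤ r by omega) with rfl | hr₁
  · simp
  · have hr₁' : (1 : ℝ) ≤ r := by exact_mod_cast hr₁
    exact mul_nonneg (sin_pi_mul_div_nonneg (by linarith) hr)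
      (sin_pi_mul_div_nonneg (by linarith) (by linarith))

lemma cross_pt_mul_cross_pt_succ_nonneg {n : ℕ} (heven : Even n) (a k : ℕ) :
    0 ≤ cross (pt n a) (pt n k) * cross (pt n a) (pt n (k + 1)) := by
  obtain ⟨m, rfl⟩ := heven
  have hcross : ∀ l : ℕ, cross (pt (m + m) a) (pt (m + m) l) = sin (π * ((a : ℝ) - l) / m) :=
    fun l => by
      rw [pt_eq_circ, pt_eq_circ, cross_circ]
      congr 1
      push_cast
      ring
  rw [hcross, hcross]
  convert sin_mul_sin_sub_one_nonneg m (a - k) using 4 <;> push_cast <;> ring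

theorem almost_halving_intersects_halving_general (n : ℕ) (hn : 3 ≤ n) (heven : Even n)
    (i j a b : ℕ) (hah : Halving n i (j + 1)) (hh : Halving n a b) :
    EInter n i j a b := by
  have hn₄ : 4 ≤ n := by
    obtain ⟨m, rfl⟩ := heven
    omega
  have hj : pt n (j + 1) = -pt n i := pt_eq_neg_of_halving hn₄ heven hah
  have hb : pt n b = -pt n a := pt_eq_neg_of_halving hn₄ heven hh
  have hside : cross (pt n a) (pt n i) * cross (pt n a) (pt n j) ≤ 0 := by
    have := cross_pt_mul_cross_pt_succ_nonneg heven a j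
    rw [hj, cross_neg] at this
    linarith
  rw [EInter, hb]
  exact segment_inter_diameter_nonempty hside

/-- For even `n`, every almost-halving edge intersects every halving edge. -/
theorem almost_halving_intersects_halving (n : ℕ) (hn : 3 ≤ n) (heven : Even n)
    (i j a b : ℕ) (hij : pt n i ≠ pt n j) (hab : pt n a ≠ pt n b)
    (hah : Halving n i (j + 1)) (hh : Halving n a b) :
    EInter n i j a b :=
  almost_halving_intersects_halving_general n hn heven i j a b hah hh
end
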